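/- arXiv:1101.2286 — 2 statements merged into one kernel-verified Lean document; each statement's English description precedes it below -/
import Mathlib

section
/- (Cotlar–Stein lemma as used) Let {Q_j}_{j∈ℤ} be bounded self-adjoint operators on L²(ℝᵈ) such that for all j, l, ‖Q_j Q_l‖ ≤ β(j−l)² for some nonnegative summable sequence β. Then the sum Σ_j Q_j converges (strongly on a dense set) to a bounded operator with ‖Σ_j Q_j‖ ≤ Σ_j β(j). -/
/-!
For a finite set `F` of indices, `T = ∑_{j ∈ F} Q j` is self-adjoint, so
`‖T‖ ^ 2 ^ k = ‖T ^ 2 ^ k‖`.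
Expanding `T ^ m` into words `Q j₁ ⋯ Q jₘ`, each word is bounded twice by grouping neighbouring
factors in pairs (starting at the first or at the second factor); the geometric mean of the two
bounds is `A · ∏ β (jᵢ - jᵢ₊₁)` with `A = ∑ β`, and summing this chain over `Fᵐ` gives
`#F · A ^ m`. Hence `‖T‖ ≤ (#F) ^ (1/m) · A → A`.

With the partial sums uniformly bounded, the vectors on which `∑ Q j x` converges form a closed
subspace. It contains every range of `Q m`, because `‖Q j Q m‖ ≤ β (j - m) ^ 2` is summable in `j`,
so its orthogonal complement is killed by every `Q j` and the subspace is everything.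
-/

open Filter Topology

noncomputable section

namespace CotlarStein

section Weights

variable {ι : Type*} (w : ι → ι → ℝ)

def chainWeight : List ι → ℝ
  | a :: b :: L => w a b * chainWeight (b :: L)
  | _ => 1

def pairingWeight (c : ℝ) : List ι → ℝ
  | [] => 1
  | [_] => c
  | a :: b :: L => w a b ^ 2 * pairingWeight c L

variable {w}

lemma chainWeight_nonneg (hw : ∀ a b, 0 ≤ w a b) : ∀ L, 0 ≤ chainWeight w L
  | [] | [_] => zero_le_one
  | a :: b :: L => mul_nonneg (hw a b) (chainWeight_nonneg hw (b :: L))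

lemma pairingWeight_nonneg {c : ℝ} (hc : 0 ≤ c) : ∀ L, 0 ≤ pairingWeight w c L
  | [] => zero_le_one
  | [_] => hc
  | a :: b :: L => mul_nonneg (sq_nonneg (w a b)) (pairingWeight_nonneg hc L)

lemma pairingWeight_cons_mul (c : ℝ) (a : ι) :
    ∀ L, pairingWeight w c (a :: L) * pairingWeight w c L = c * chainWeight w (a :: L) ^ 2
  | [] => by simp [pairingWeight, chainWeight]
  | b :: L => by
    simp only [pairingWeight, chainWeight]
    linear_combination w a b ^ 2 * pairingWeight_cons_mul c b L

lemma chainWeight_ofFn_cons {m : ℕ} (a : ι) (p : Fin (m + 1) → ι) :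
    chainWeight w (List.ofFn (Fin.cons a p : Fin (m + 2) → ι))
      = w a (p 0) * chainWeight w (List.ofFn p) := by
  simp [List.ofFn_succ, chainWeight]

end Weights

lemma sum_pi_fin_succ {ι M : Type*} [Fintype ι] [AddCommMonoid M] {m : ℕ}
    (g : (Fin (m + 1) → ι) → M) :
    ∑ p, g p = ∑ a, ∑ p : Fin m → ι, g (Fin.cons a p) := by
  rw [← (Fin.consEquiv fun _ => ι).sum_comp, Fintype.sum_prod_type]
  rfl

lemma sum_pow_eq_sum_prod_ofFn {ι S : Type*} [Fintype ι] [Semiring S] (f : ι → S) :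
    ∀ m : ℕ, (∑ i, f i) ^ m = ∑ p : Fin m → ι, ((List.ofFn p).map f).prod
  | 0 => by simp
  | m + 1 => by
    rw [pow_succ', sum_pow_eq_sum_prod_ofFn f m, sum_pi_fin_succ, Finset.sum_mul]
    refine Finset.sum_congr rfl fun a _ => ?_
    rw [Finset.mul_sum]
    simp [List.ofFn_succ]

lemma sum_chainWeight_le {ι : Type*} [Fintype ι] {w : ι → ι → ℝ} (hw : ∀ a b, 0 ≤ w a b)
    {A : ℝ} (hA : 0 ≤ A) (hrow : ∀ b, ∑ a, w a b ≤ A) :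
    ∀ m : ℕ, ∑ p : Fin (m + 1) → ι, chainWeight w (List.ofFn p) ≤ Fintype.card ι * A ^ m
  | 0 => by simp [chainWeight]
  | m + 1 => by
    calc ∑ p : Fin (m + 2) → ι, chainWeight w (List.ofFn p)
        = ∑ p : Fin (m + 1) → ι, (∑ a, w a (p 0)) * chainWeight w (List.ofFn p) := by
          simp only [sum_pi_fin_succ (m := m + 1), chainWeight_ofFn_cons, Finset.sum_mul]
          exact Finset.sum_comm
      _ ≤ ∑ p : Fin (m + 1) → ι, A * chainWeight w (List.ofFn p) := by
          gcongr with p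
          · exact chainWeight_nonneg hw _
          · exact hrow (p 0)
      _ ≤ A * (Fintype.card ι * A ^ m) := by
          rw [← Finset.mul_sum]
          exact mul_le_mul_of_nonneg_left (sum_chainWeight_le hw hA hrow m) hA
      _ = Fintype.card ι * A ^ (m + 1) := by ring

lemma le_of_frequently_pow_le_mul_pow {a A C : ℝ} (hA : 0 ≤ A)
    (h : ∃ᶠ n in atTop, a ^ n ≤ C * A ^ n) : a ≤ A := by
  by_contra! hAa
  have ha : 0 < a := hA.trans_lt hAa
  have hlim : Tendsto (fun n : ℕ => C * (A / a) ^ n) atTop (𝓝 0) := by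
    simpa using (tendsto_pow_atTop_nhds_zero_of_lt_one (div_nonneg hA ha.le)
      ((div_lt_one ha).2 hAa)).const_mul C
  obtain ⟨n, hn, hlt⟩ := (h.and_eventually (hlim.eventually (gt_mem_nhds one_pos))).exists
  rw [div_pow, ← mul_div_assoc, div_lt_one (pow_pos ha n)] at hlt
  exact hlt.not_ge hn

section CStarRing

variable {R : Type*} [NormedRing R] [StarRing R] [CStarRing R]

lemma norm_one_le_one : ‖(1 : R)‖ ≤ 1 := by
  rcases subsingleton_or_nontrivial R with _ | _
  · simp [Subsingleton.elim (1 : R) 0]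
  · exact CStarRing.norm_one.le

variable {ι : Type*} {Q : ι → R} {w : ι → ι → ℝ} {c : ℝ}

lemma norm_prod_le_pairingWeight (hQ₁ : ∀ a, ‖Q a‖ ≤ c) (hQ₂ : ∀ a b, ‖Q a * Q b‖ ≤ w a b ^ 2) :
    ∀ L : List ι, ‖(L.map Q).prod‖ ≤ pairingWeight w c L
  | [] => norm_one_le_one
  | [a] => by simpa [pairingWeight] using hQ₁ a
  | a :: b :: L => by
    rw [List.map_cons, List.map_cons, List.prod_cons, List.prod_cons, ← mul_assoc]
    exact (norm_mul_le _ _).trans (mul_le_mul (hQ₂ a b)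
      (norm_prod_le_pairingWeight hQ₁ hQ₂ L) (norm_nonneg _) (sq_nonneg _))

-- The geometric mean of the pairings starting at the first and at the second factor.
lemma norm_prod_le_mul_chainWeight (hw : ∀ a b, 0 ≤ w a b) (hc : 0 ≤ c)
    (hQ₁ : ∀ a, ‖Q a‖ ≤ c) (hQ₂ : ∀ a b, ‖Q a * Q b‖ ≤ w a b ^ 2) (a : ι) (L : List ι) :
    ‖((a :: L).map Q).prod‖ ≤ c * chainWeight w (a :: L) := by
  set P := ((a :: L).map Q).prod
  have h₁ : ‖P‖ ≤ pairingWeight w c (a :: L) := norm_prod_le_pairingWeight hQ₁ hQ₂ _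
  have h₂ : ‖P‖ ≤ c * pairingWeight w c L := by
    simp only [P, List.map_cons, List.prod_cons]
    exact (norm_mul_le _ _).trans
      (mul_le_mul (hQ₁ a) (norm_prod_le_pairingWeight hQ₁ hQ₂ L) (norm_nonneg _) hc)
  have hsq : ‖P‖ ^ 2 ≤ (c * chainWeight w (a :: L)) ^ 2 := by
    calc ‖P‖ ^ 2 ≤ pairingWeight w c (a :: L) * (c * pairingWeight w c L) := by
          rw [sq]; exact mul_le_mul h₁ h₂ (norm_nonneg _) (pairingWeight_nonneg hc _)
      _ = (c * chainWeight w (a :: L)) ^ 2 := by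
          rw [mul_left_comm, pairingWeight_cons_mul]; ring
  exact (pow_le_pow_iff_left₀ (norm_nonneg _)
    (mul_nonneg hc (chainWeight_nonneg hw _)) two_ne_zero).1 hsq

lemma _root_.IsSelfAdjoint.norm_le_of_norm_mul_self_le {x : R} (hx : IsSelfAdjoint x) {c : ℝ}
    (hc : 0 ≤ c) (h : ‖x * x‖ ≤ c ^ 2) : ‖x‖ ≤ c := by
  rw [hx.norm_mul_self] at h
  exact (pow_le_pow_iff_left₀ (norm_nonneg _) hc two_ne_zero).1 h

theorem norm_sum_le_of_norm_mul_le_sq [Fintype ι] (hsa : ∀ a, IsSelfAdjoint (Q a))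
    (hw : ∀ a b, 0 ≤ w a b) {A : ℝ} (hA : 0 ≤ A) (hrow : ∀ b, ∑ a, w a b ≤ A)
    (hQ : ∀ a b, ‖Q a * Q b‖ ≤ w a b ^ 2) : ‖∑ a, Q a‖ ≤ A := by
  set T := ∑ a, Q a
  have hQ₁ : ∀ a, ‖Q a‖ ≤ A := fun a =>
    ((hsa a).norm_le_of_norm_mul_self_le (hw a a) (hQ a a)).trans
      ((Finset.single_le_sum (fun b _ => hw b a) (Finset.mem_univ a)).trans (hrow a))
  have hpow : ∀ m : ℕ, ‖T ^ (m + 1)‖ ≤ Fintype.card ι * A ^ (m + 1) := fun m => by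
    calc ‖T ^ (m + 1)‖
        ≤ ∑ p : Fin (m + 1) → ι, ‖((List.ofFn p).map Q).prod‖ := by
          rw [sum_pow_eq_sum_prod_ofFn]; exact norm_sum_le _ _
      _ ≤ ∑ p : Fin (m + 1) → ι, A * chainWeight w (List.ofFn p) := by
          gcongr with p
          rw [List.ofFn_succ]
          exact norm_prod_le_mul_chainWeight hw hA hQ₁ hQ _ _
      _ ≤ A * (Fintype.card ι * A ^ m) := by
          rw [← Finset.mul_sum]
          exact mul_le_mul_of_nonneg_left (sum_chainWeight_le hw hA hrow m) hA
      _ = Fintype.card ι * A ^ (m + 1) := by ring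
  have hTsa : IsSelfAdjoint T := isSelfAdjoint_sum _ fun a _ => hsa a
  refine le_of_frequently_pow_le_mul_pow (C := Fintype.card ι) hA
    (frequently_atTop.2 fun N => ⟨2 ^ N, N.lt_two_pow_self.le, ?_⟩)
  rw [← hTsa.norm_pow_two_pow]
  simpa only [Nat.sub_add_cancel Nat.one_le_two_pow] using hpow (2 ^ N - 1)

end CStarRing

section Convergence

variable {ι 𝕜 E F : Type*} [NontriviallyNormedField 𝕜] [NormedAddCommGroup E] [NormedSpace 𝕜 E]
  [NormedAddCommGroup F] [NormedSpace 𝕜 F]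

def summableDomain (f : ι → E →L[𝕜] F) : Submodule 𝕜 E where
  carrier := {x | Summable fun i => f i x}
  add_mem' {x y} hx hy := by simpa only [Set.mem_ofPred_eq, map_add] using hx.add hy
  zero_mem' := by simpa only [Set.mem_ofPred_eq, map_zero] using summable_zero
  smul_mem' a x hx := by simpa only [Set.mem_ofPred_eq, map_smul] using hx.const_smul a

lemma mem_summableDomain {f : ι → E →L[𝕜] F} {x : E} :
    x ∈ summableDomain f ↔ Summable fun i => f i x := Iff.rfl

lemma isClosed_summableDomain [CompleteSpace F] {f : ι → E →L[𝕜] F} {C : ℝ}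
    (hC : ∀ s : Finset ι, ‖∑ i ∈ s, f i‖ ≤ C) : IsClosed (summableDomain f : Set E) := by
  have hC0 : 0 ≤ C := (norm_nonneg _).trans (hC ∅)
  refine isClosed_of_closure_subset fun x hx => summable_iff_vanishing_norm.2 fun ε hε => ?_
  obtain ⟨y, hy, hxy⟩ := Metric.mem_closure_iff.1 hx (ε / 2 / (C + 1)) (by positivity)
  obtain ⟨s, hs⟩ := summable_iff_vanishing_norm.1 hy (ε / 2) (half_pos hε)
  refine ⟨s, fun t ht => ?_⟩
  have hsplit : ∑ i ∈ t, f i x = (∑ i ∈ t, f i) (x - y) + ∑ i ∈ t, f i y := by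
    simp [sum_apply]
  have hclose : C * ‖x - y‖ ≤ ε / 2 := by
    rw [← dist_eq_norm]
    calc C * dist x y ≤ (C + 1) * (ε / 2 / (C + 1)) := by gcongr; linarith
      _ = ε / 2 := by field_simp
  calc ‖∑ i ∈ t, f i x‖ ≤ C * ‖x - y‖ + ‖∑ i ∈ t, f i y‖ := by
        rw [hsplit]
        exact norm_add_le_of_le ((∑ i ∈ t, f i).le_of_opNorm_le (hC t) _) le_rfl
    _ < ε := by linarith [hs t ht]

lemma exists_hasSum_apply_of_norm_sum_le {f : ι → E →L[𝕜] F} {C : ℝ}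
    (hsum : ∀ x, Summable fun i => f i x) (hC : ∀ s : Finset ι, ‖∑ i ∈ s, f i‖ ≤ C) :
    ∃ S : E →L[𝕜] F, (∀ x, HasSum (fun i => f i x) (S x)) ∧ ‖S‖ ≤ C := by
  have hlim : Tendsto (fun s : Finset ι => ⇑(∑ i ∈ s, f i)) atTop (𝓝 fun x => ∑' i, f i x) :=
    tendsto_pi_nhds.2 fun x => by
      simp only [sum_apply]
      exact (hsum x).hasSum
  have hmem : (fun x => ∑' i, f i x) ∈
      closure (DFunLike.coe '' Metric.closedBall (0 : E →L[𝕜] F) C) :=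
    mem_closure_of_tendsto hlim (Eventually.of_forall fun s =>
      Set.mem_image_of_mem _ (by simpa using hC s))
  set S := ContinuousLinearMap.ofMemClosureImageCoeBounded _ Metric.isBounded_closedBall hmem
  refine ⟨S, fun x => (hsum x).hasSum, ?_⟩
  simpa using ContinuousLinearMap.is_weak_closed_closedBall 0 C (f := S) hmem

end Convergence

-- `⟪Q (Q x), x⟫ = ‖Q x‖²` for self-adjoint `Q`, so a vector orthogonal to every range is killed
-- by every `Q j`, and such a vector lies in the domain.
lemma summableDomain_eq_top {ι 𝕜 H : Type*} [RCLike 𝕜] [NormedAddCommGroup H]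
    [InnerProductSpace 𝕜 H] [CompleteSpace H] {Q : ι → H →L[𝕜] H}
    (hsa : ∀ j, IsSelfAdjoint (Q j)) (hclosed : IsClosed (summableDomain Q : Set H))
    (hrange : ∀ m z, Q m z ∈ summableDomain Q) : summableDomain Q = ⊤ := by
  have : CompleteSpace (summableDomain Q) := hclosed.completeSpace_coe
  rw [← Submodule.orthogonal_eq_bot_iff, Submodule.eq_bot_iff]
  intro x hx
  have hQx : ∀ j, Q j x = 0 := fun j => by
    rw [← inner_self_eq_zero (𝕜 := 𝕜), ← ContinuousLinearMap.adjoint_inner_left,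
      ← ContinuousLinearMap.star_eq_adjoint, (hsa j).star_eq]
    exact Submodule.inner_right_of_mem_orthogonal (hrange j (Q j x)) hx
  have hxD : x ∈ summableDomain Q := by
    simp [mem_summableDomain, hQx]
  exact inner_self_eq_zero.1 (Submodule.inner_right_of_mem_orthogonal hxD hx)

lemma sum_comp_sub_le_tsum {β : ℤ → ℝ} (hβ0 : ∀ j, 0 ≤ β j) (hβs : Summable β)
    (s : Finset ℤ) (b : ℤ) : ∑ a ∈ s, β (a - b) ≤ ∑' j, β j := by
  rw [← (Equiv.subRight b).tsum_eq β]
  exact ((Equiv.subRight b).summable_iff.2 hβs).sum_le_tsum s fun a _ => hβ0 _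

lemma summable_apply_apply_of_norm_mul_le {𝕜 E : Type*} [NontriviallyNormedField 𝕜]
    [NormedAddCommGroup E] [NormedSpace 𝕜 E] [CompleteSpace E] {Q : ℤ → E →L[𝕜] E}
    {β : ℤ → ℝ} (hβ0 : ∀ j, 0 ≤ β j) (hβs : Summable β)
    (hQ : ∀ j l, ‖Q j * Q l‖ ≤ β (j - l) ^ 2) (m : ℤ) (z : E) :
    Summable fun j => Q j (Q m z) := by
  have hshift : Summable fun j => β (j - m) := (Equiv.subRight m).summable_iff.2 hβs
  refine Summable.of_norm_bounded ((hshift.mul_left (∑' i, β i)).mul_right ‖z‖) fun j => ?_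
  calc ‖Q j (Q m z)‖ ≤ ‖Q j * Q m‖ * ‖z‖ := (Q j * Q m).le_opNorm z
    _ ≤ β (j - m) ^ 2 * ‖z‖ := by gcongr; exact hQ j m
    _ ≤ (∑' i, β i) * β (j - m) * ‖z‖ := by
        rw [sq]
        gcongr
        exacts [hβ0 _, hβs.le_tsum _ fun i _ => hβ0 i]

end CotlarStein

open CotlarStein

/-- the Cotlar–Stein almost-orthogonality lemma, for self-adjoint operators. -/
theorem cotlar_stein {H : Type*} [NormedAddCommGroup H] [InnerProductSpace ℂ H]
    [CompleteSpace H]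
    (Q : ℤ → H →L[ℂ] H) (hsa : ∀ j, IsSelfAdjoint (Q j))
    (β : ℤ → ℝ) (hβ0 : ∀ j, 0 ≤ β j) (hβs : Summable β)
    (hQ : ∀ j l, ‖Q j * Q l‖ ≤ (β (j - l)) ^ 2) :
    ∃ S : H →L[ℂ] H, (∀ x : H, HasSum (fun j => Q j x) (S x)) ∧ ‖S‖ ≤ ∑' j, β j := by
  have hpartial : ∀ s : Finset ℤ, ‖∑ j ∈ s, Q j‖ ≤ ∑' j, β j := fun s => by
    rw [← Finset.sum_coe_sort s Q]
    exact norm_sum_le_of_norm_mul_le_sq (Q := fun j : s => Q j) (w := fun a b => β (a - b))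
      (fun j => hsa j) (fun _ _ => hβ0 _) (tsum_nonneg hβ0)
      (fun b => (Finset.sum_coe_sort s _).trans_le (sum_comp_sub_le_tsum hβ0 hβs s b))
      (fun a b => hQ a b)
  have hdom := summableDomain_eq_top hsa (isClosed_summableDomain hpartial)
    (summable_apply_apply_of_norm_mul_le hβ0 hβs hQ)
  exact exists_hasSum_apply_of_norm_sum_le (fun x => Submodule.eq_top_iff'.1 hdom x) hpartial
end
end

section
/- Let G be a compact Lie group with Haar measure, and let the scattering transform on L²(G) at maximal scale 2^L = 1 be defined by S̃₀[p̃]f = |G|^{-1} ∫_G U[p̃]f(g) dg, where U[p̃] cascades wavelet-modulus operators built from left convolutions on G. Then S̃₀ is invariant under the left action of G: for every f ∈ L²(G), every g ∈ G, and every finite path p̃, S̃₀[p̃](L_g f) = S̃₀[p̃]f, where L_g f(r) = f(g^{-1}r). -/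
open MeasureTheory Filter
open scoped Topology

noncomputable section

/-- Left convolution on a group G: (f ⋆ h)(r) = ∫_G f(g) h(g⁻¹ r) dμ(g). -/
def convG {G : Type*} [Group G] [MeasurableSpace G] (μ : Measure G)
    (f h : G → ℂ) (r : G) : ℂ :=
  ∫ g, f g * h (g⁻¹ * r) ∂μ

/-- The scattering propagator on L²(G): U[p̃]f cascades wavelet-modulus operators
Ũ[λ̃]f = |f ⋆ ψ̃_{λ̃}| along the path p̃. -/
def scatterG {G : Type*} [Group G] [MeasurableSpace G] (μ : Measure G)
    {Λ : Type*} (ψ : Λ → G → ℂ) : List Λ → (G → ℂ) → (G → ℂ)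
  | [], f => f
  | lam :: p, f => scatterG μ ψ p (fun r => ((‖convG μ f (ψ lam) r‖ : ℝ) : ℂ))

/-! Left convolution commutes with left translation by left invariance of the measure, hence so
does each wavelet-modulus operator and, by induction on the path, the propagator `scatterG`. The
integral of a left-translated function against a left-invariant measure is unchanged. -/

section LeftTranslation

variable {G : Type*} [Group G] [MeasurableSpace G] [MeasurableMul G]
  (μ : Measure G) [μ.IsMulLeftInvariant]

theorem convG_comp_mul_left (f h : G → ℂ) (g r : G) :
    convG μ (fun x => f (g * x)) h r = convG μ f h (g * r) := by
  unfold convG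
  rw [← integral_mul_left_eq_self (fun x => f (g * x) * h (x⁻¹ * r)) g⁻¹]
  simp only [mul_inv_cancel_left, mul_inv_rev, inv_inv, mul_assoc]

theorem scatterG_comp_mul_left {Λ : Type*} (ψ : Λ → G → ℂ) (p : List Λ) (f : G → ℂ) (g : G) :
    scatterG μ ψ p (fun x => f (g * x)) = fun r => scatterG μ ψ p f (g * r) := by
  induction p generalizing f with
  | nil => rfl
  | cons lam p ih =>
    simp only [scatterG, convG_comp_mul_left]
    exact ih fun r => ((‖convG μ f (ψ lam) r‖ : ℝ) : ℂ)

theorem integral_scatterG_comp_mul_left {Λ : Type*} (ψ : Λ → G → ℂ) (p : List Λ) (f : G → ℂ)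
    (g : G) :
    ∫ r, scatterG μ ψ p (fun x => f (g * x)) r ∂μ = ∫ r, scatterG μ ψ p f r ∂μ := by
  rw [scatterG_comp_mul_left]
  exact integral_mul_left_eq_self (scatterG μ ψ p f) g

end LeftTranslation

theorem group_scattering_invariant_general {G : Type*} [Group G] [TopologicalSpace G]
    [IsTopologicalGroup G] [MeasurableSpace G] [BorelSpace G]
    (μ : Measure G) [μ.IsHaarMeasure]
    {Λ : Type*} (ψ : Λ → G → ℂ) :
    ∀ f : G → ℂ, MemLp f 2 μ → ∀ g : G, ∀ p : List Λ,
      (μ Set.univ).toReal⁻¹ •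
          (∫ r, scatterG μ ψ p (fun x => f (g⁻¹ * x)) r ∂μ) =
        (μ Set.univ).toReal⁻¹ • ∫ r, scatterG μ ψ p f r ∂μ := by
  intro f _ g p
  rw [integral_scatterG_comp_mul_left]

/-- on a compact group G with Haar measure, the scattering transform at maximal
scale S̃₀[p̃]f = |G|⁻¹ ∫_G U[p̃]f dμ is invariant under the left action L_g f(r) = f(g⁻¹ r). -/
theorem group_scattering_invariant {G : Type*} [Group G] [TopologicalSpace G]
    [IsTopologicalGroup G] [CompactSpace G] [MeasurableSpace G] [BorelSpace G]
    (μ : Measure G) [μ.IsHaarMeasure]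
    {Λ : Type*} (ψ : Λ → G → ℂ) (hψ : ∀ lam, MemLp (ψ lam) 2 μ) :
    ∀ f : G → ℂ, MemLp f 2 μ → ∀ g : G, ∀ p : List Λ,
      (μ Set.univ).toReal⁻¹ •
          (∫ r, scatterG μ ψ p (fun x => f (g⁻¹ * x)) r ∂μ) =
        (μ Set.univ).toReal⁻¹ • ∫ r, scatterG μ ψ p f r ∂μ :=
  group_scattering_invariant_general μ ψ
end
end
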